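/- arXiv:alg-geom/9712010 — 2 statements merged into one kernel-verified Lean document; each statement's English description precedes it below -/
import Mathlib

section
/- Let A → B be a local homomorphism of Noetherian local rings with k the residue field of A, and u ∈ B. Then the following are equivalent: (1) u is a nonzerodivisor in B and B/uB is flat over A; (2) the image of u in B ⊗_A k is a nonzerodivisor. -/
/-!
Write `𝔪` for the maximal ideal of `A`. Condition (2) says that `u` is regular on `B ⧸ 𝔪B`, and
since `B` is flat, `B ⧸ uB` is flat exactly when `uB ∩ IB = I·uB` for every ideal `I`; when `u` is a
nonzerodivisor this is the regularity of `u` on every `B ⧸ IB`. So everything reduces to passing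
from regularity on `B ⧸ 𝔪B` to regularity on `B ⧸ IB`. Flatness of `B` identifies
`(I + 𝔪ⁿ)B ⧸ (I + 𝔪ⁿ⁺¹)B` with the tensor product of `B` and a vector space over the residue field,
on which `u` is regular, so `u` is regular modulo every `(I + 𝔪ⁿ)B`, and Krull's intersection
theorem in `B ⧸ IB` concludes.
-/

open scoped TensorProduct

open LinearMap IsLocalRing

namespace Ideal

variable {R M M' : Type*} [CommRing R] [AddCommGroup M] [Module R M] [AddCommGroup M']
  [Module R M'] (I : Ideal R)

noncomputable def smulMap (M : Type*) [AddCommGroup M] [Module R M] : I ⊗[R] M →ₗ[R] M :=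
  TensorProduct.lift ((lsmul R M).comp I.subtype)

@[simp] lemma smulMap_tmul (a : I) (x : M) : I.smulMap M (a ⊗ₜ x) = (a : R) • x := rfl

lemma smulMap_eq_lid_comp_rTensor :
    I.smulMap M = (TensorProduct.lid R M).toLinearMap ∘ₗ I.subtype.rTensor M :=
  TensorProduct.ext' fun _ _ => rfl

lemma smulMap_injective [Module.Flat R M] : Function.Injective (I.smulMap M) := by
  rw [smulMap_eq_lid_comp_rTensor]
  exact (TensorProduct.lid R M).injective.comp
    (Module.Flat.rTensor_preserves_injective_linearMap _ I.injective_subtype)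

lemma range_smulMap : range (I.smulMap M) = I • ⊤ := by
  rw [smulMap_eq_lid_comp_rTensor, range_comp, Submodule.map_range_rTensor_subtype_lid]

lemma mem_smul_top_iff_mem_range_smulMap {x : M} :
    x ∈ I • (⊤ : Submodule R M) ↔ x ∈ range (I.smulMap M) := by
  rw [range_smulMap]

lemma mem_smul_iff_exists_smulMap {N : Submodule R M} {x : M} :
    x ∈ I • N ↔ ∃ z : I ⊗[R] N, (I.smulMap N z : M) = x := by
  refine ⟨fun hx => ?_, ?_⟩
  · obtain ⟨z, hz⟩ := I.mem_smul_top_iff_mem_range_smulMap.mp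
      ((Submodule.mem_smul_top_iff I N ⟨x, Submodule.smul_le_right hx⟩).mpr hx)
    exact ⟨z, congrArg Subtype.val hz⟩
  · rintro ⟨z, rfl⟩
    exact (Submodule.mem_smul_top_iff I N _).mp (I.mem_smul_top_iff_mem_range_smulMap.mpr ⟨z, rfl⟩)

lemma smulMap_lTensor (f : M →ₗ[R] M') (x : I ⊗[R] M) :
    I.smulMap M' (f.lTensor I x) = f (I.smulMap M x) := by
  induction x using TensorProduct.induction_on with
  | zero => simp
  | tmul a x => simp
  | add x y hx hy => simp [hx, hy]

lemma smulMap_rTensor_inclusion {J : Ideal R} (h : J ≤ I) (x : J ⊗[R] M) :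
    I.smulMap M ((Submodule.inclusion h).rTensor M x) = J.smulMap M x := by
  induction x using TensorProduct.induction_on with
  | zero => simp
  | tmul a x => rfl
  | add x y hx hy => simp [hx, hy]

/-- Flatness of `M'` identifies `J ⊗ M'` with `J M'`; the rest is a diagram chase along
`J' ⊗ - → J ⊗ - → (J ⧸ J') ⊗ - → 0`. -/
lemma mem_smul_top_of_lTensor_quotient_injective [Module.Flat R M'] (f : M →ₗ[R] M')
    {J J' : Ideal R} (hJ' : J' ≤ J)
    (hf : Function.Injective (f.lTensor (J ⧸ Submodule.comap J.subtype J')))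
    {x : M} (hx : x ∈ J • (⊤ : Submodule R M)) (hfx : f x ∈ J' • (⊤ : Submodule R M')) :
    x ∈ J' • (⊤ : Submodule R M) := by
  set q := (Submodule.comap J.subtype J').mkQ
  have hexact : Function.Exact (Submodule.inclusion hJ') q := by
    rw [LinearMap.exact_iff, Submodule.ker_mkQ, Submodule.range_inclusion]
  obtain ⟨y, rfl⟩ := J.mem_smul_top_iff_mem_range_smulMap.mp hx
  obtain ⟨y', hy'⟩ := J'.mem_smul_top_iff_mem_range_smulMap.mp hfx
  have hfy : f.lTensor J y = (Submodule.inclusion hJ').rTensor M' y' := by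
    apply J.smulMap_injective
    rw [smulMap_lTensor, smulMap_rTensor_inclusion, hy']
  have hqy : q.rTensor M y = 0 := by
    apply hf
    calc f.lTensor _ (q.rTensor M y) = q.rTensor M' (f.lTensor J y) := by
          rw [← comp_apply, lTensor_comp_rTensor, ← rTensor_comp_lTensor, comp_apply]
      _ = 0 := by
          rw [hfy, (rTensor_exact M' hexact (Submodule.mkQ_surjective _)).apply_apply_eq_zero]
      _ = f.lTensor _ 0 := (map_zero _).symm
  obtain ⟨w, rfl⟩ := (rTensor_exact M hexact (Submodule.mkQ_surjective _) y).mp hqy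
  rw [smulMap_rTensor_inclusion]
  exact J'.mem_smul_top_iff_mem_range_smulMap.mpr ⟨w, rfl⟩

end Ideal

namespace Submodule

variable {R M : Type*} [CommRing R] [AddCommGroup M] [Module R M] (N : Submodule R M)

lemma inf_smul_top_le_smul_of_flat_quotient [Module.Flat R (M ⧸ N)] (I : Ideal R) :
    N ⊓ I • ⊤ ≤ I • N := by
  rintro x ⟨hxN, hx⟩
  obtain ⟨y, rfl⟩ := I.mem_smul_top_iff_mem_range_smulMap.mp hx
  have hy : y ∈ ker (N.mkQ.lTensor I) := by
    apply I.smulMap_injective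
    rw [I.smulMap_lTensor, mkQ_apply, (Quotient.mk_eq_zero N).mpr hxN, map_zero]
  obtain ⟨z, rfl⟩ := (lTensor_mkQ I N).le hy
  rw [I.smulMap_lTensor]
  exact I.mem_smul_iff_exists_smulMap.mpr ⟨z, rfl⟩

lemma flat_quotient_of_inf_smul_top_le [Module.Flat R M] (h : ∀ I : Ideal R, N ⊓ I • ⊤ ≤ I • N) :
    Module.Flat R (M ⧸ N) := by
  refine Module.Flat.iff_lift_lsmul_comp_subtype_injective.mpr fun I _ => ?_
  change Function.Injective (I.smulMap _)
  rw [injective_iff_map_eq_zero]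
  intro z hz
  obtain ⟨y, rfl⟩ := lTensor_surjective I N.mkQ_surjective z
  rw [I.smulMap_lTensor, mkQ_apply, Quotient.mk_eq_zero] at hz
  obtain ⟨w, hw⟩ := I.mem_smul_iff_exists_smulMap.mp
    (h I ⟨hz, I.mem_smul_top_iff_mem_range_smulMap.mpr ⟨y, rfl⟩⟩)
  rw [← subtype_apply, ← I.smulMap_lTensor] at hw
  rw [← I.smulMap_injective hw, ← lTensor_comp_apply, (exact_subtype_mkQ N).linearMap_comp_eq_zero,
    lTensor_zero, LinearMap.zero_apply]

end Submodule

namespace LinearMap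

variable {R M M' : Type*} [CommRing R] [AddCommGroup M] [Module R M] [AddCommGroup M']
  [Module R M'] (f : M →ₗ[R] M')

lemma lTensor_quotient_injective_iff (I : Ideal R) :
    Function.Injective (f.lTensor (R ⧸ I)) ↔
      ∀ x, f x ∈ I • (⊤ : Submodule R M') → x ∈ I • (⊤ : Submodule R M) := by
  simp_rw [← ker_tensorProductMk (Q := M), ← ker_tensorProductMk (Q := M'), mem_ker]
  constructor
  · intro hf x hx
    apply hf
    simpa using hx
  · intro hf
    rw [injective_iff_map_eq_zero]
    intro z hz
    obtain ⟨x, rfl⟩ := TensorProduct.mk_surjective R M (R ⧸ I) Ideal.Quotient.mk_surjective z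
    simpa using hf x (by simpa using hz)

open TensorProduct.AlgebraTensorModule in
/-- `X ⊗[R] f` is `X ⊗[S] (S ⊗[R] f)`, and `X` is flat over `S`. -/
lemma lTensor_injective_of_lTensor_injective {S X : Type*} [CommRing S] [Algebra R S]
    [AddCommGroup X] [Module S X] [Module R X] [IsScalarTower R S X] [Module.Flat S X]
    (hf : Function.Injective (f.lTensor S)) : Function.Injective (f.lTensor X) := by
  have key := congrArg DFunLike.coe (lTensor_comp_cancelBaseChange R S S (M := X) f)
  rw [coe_comp, coe_comp, coe_lTensor, LinearEquiv.coe_coe, LinearEquiv.coe_coe] at key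
  refine Function.Injective.of_comp_right ?_ (cancelBaseChange R S S X M).surjective
  rw [key]
  exact (cancelBaseChange R S S X M').injective.comp
    (Module.Flat.lTensor_preserves_injective_linearMap
      (TensorProduct.AlgebraTensorModule.lTensor S S f) hf)

lemma lTensor_quotient_injective_of_mul_le [IsLocalRing R]
    (hf : Function.Injective (f.lTensor (ResidueField R))) {J J' : Ideal R}
    (hJ : maximalIdeal R * J ≤ J') :
    Function.Injective (f.lTensor (J ⧸ Submodule.comap J.subtype J')) := by
  have htors : Module.IsTorsionBySet R (J ⧸ Submodule.comap J.subtype J') (maximalIdeal R) := by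
    rw [Module.isTorsionBySet_quotient_iff]
    exact fun x a ha => hJ (Ideal.mul_mem_mul ha x.2)
  let _ : Module (ResidueField R) (J ⧸ Submodule.comap J.subtype J') := htors.module
  have : IsScalarTower R (ResidueField R) (J ⧸ Submodule.comap J.subtype J') :=
    htors.isScalarTower
  exact f.lTensor_injective_of_lTensor_injective hf

end LinearMap

lemma Algebra.TensorProduct.tmul_one_mem_nonZeroDivisors_iff {A B T : Type*} [CommRing A]
    [CommRing B] [CommRing T] [Algebra A B] [Algebra A T] (u : B) :
    u ⊗ₜ[A] (1 : T) ∈ nonZeroDivisors (B ⊗[A] T) ↔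
      Function.Injective ((mulLeft A u).lTensor T) := by
  have hmul : ∀ z : B ⊗[A] T, (u ⊗ₜ[A] (1 : T)) * z = (mulLeft A u).rTensor T z := by
    intro z
    induction z using TensorProduct.induction_on with
    | zero => simp
    | tmul b t => simp
    | add z w hz hw => simp [mul_add, hz, hw]
  simp_rw [mem_nonZeroDivisors_iff_left, hmul, lTensor_inj_iff_rTensor_inj,
    injective_iff_map_eq_zero]

section FlatQuotient

variable {A B : Type*} [CommRing A] [CommRing B] [Algebra A B]

lemma smul_restrictScalars_span_singleton (I : Ideal A) (u : B) :
    I • (Ideal.span {u}).restrictScalars A = (I • (⊤ : Submodule A B)).map (mulLeft A u) := by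
  have : (Ideal.span {u}).restrictScalars A = (⊤ : Submodule A B).map (mulLeft A u) := by
    ext x
    simp [Ideal.mem_span_singleton', mul_comm]
  rw [this, Submodule.map_smul'']

lemma flat_quotient_span_singleton_iff [Module.Flat A B] {u : B} (hu : u ∈ nonZeroDivisors B) :
    Module.Flat A (B ⧸ Ideal.span {u}) ↔
      ∀ (I : Ideal A) (b : B), u * b ∈ I • (⊤ : Submodule A B) → b ∈ I • (⊤ : Submodule A B) := by
  rw [← Module.Flat.equiv_iff (Submodule.Quotient.restrictScalarsEquiv A (Ideal.span {u}))]
  constructor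
  · intro _ I b hb
    have := (Ideal.span {u}).restrictScalars A |>.inf_smul_top_le_smul_of_flat_quotient I
      ⟨Ideal.mem_span_singleton'.mpr ⟨b, mul_comm b u⟩, hb⟩
    rw [smul_restrictScalars_span_singleton] at this
    obtain ⟨y, hy, hyb⟩ := this
    rwa [(isRegular_iff_mem_nonZeroDivisors.mpr hu).left hyb] at hy
  · refine fun h => Submodule.flat_quotient_of_inf_smul_top_le _ fun I x ⟨hxu, hx⟩ => ?_
    obtain ⟨c, rfl⟩ := Ideal.mem_span_singleton'.mp hxu
    rw [smul_restrictScalars_span_singleton, mul_comm]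
    exact ⟨c, h I c (by rwa [mul_comm]), rfl⟩

end FlatQuotient

section LocalCriterion

variable {A B : Type*} [CommRing A] [CommRing B] [IsLocalRing A] [IsLocalRing B]
  [IsNoetherianRing B] [Algebra A B] [IsLocalHom (algebraMap A B)]

/-- Krull's intersection theorem in `B ⧸ I B`. -/
lemma mem_smul_top_of_forall_mem_sup_pow_smul_top (I : Ideal A) {b : B}
    (h : ∀ n : ℕ, b ∈ (I ⊔ maximalIdeal A ^ n) • (⊤ : Submodule A B)) :
    b ∈ I • (⊤ : Submodule A B) := by
  set J := I.map (algebraMap A B)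
  rw [Ideal.smul_top_eq_map, Submodule.restrictScalars_mem, ← Ideal.Quotient.eq_zero_iff_mem]
  refine IsHausdorff.haus (inferInstance : IsHausdorff (maximalIdeal B) (B ⧸ J)) _ fun n => ?_
  rw [SModEq.zero, Ideal.smul_top_eq_map, Submodule.restrictScalars_mem,
    Ideal.Quotient.algebraMap_eq, Ideal.mem_quotient_iff_mem_sup, sup_comm]
  have hb := h n
  rw [Ideal.smul_top_eq_map, Submodule.restrictScalars_mem, Ideal.map_sup, Ideal.map_pow] at hb
  exact sup_le_sup_left (Ideal.pow_right_mono (map_maximalIdeal_le _) n) J hb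

lemma mem_smul_top_of_mul_mem_smul_top_of_maximalIdeal [Module.Flat A B] {u : B}
    (hu : ∀ b : B, u * b ∈ maximalIdeal A • (⊤ : Submodule A B) →
      b ∈ maximalIdeal A • (⊤ : Submodule A B))
    (I : Ideal A) {b : B} (hb : u * b ∈ I • (⊤ : Submodule A B)) :
    b ∈ I • (⊤ : Submodule A B) := by
  have hk : Function.Injective ((mulLeft A u).lTensor (ResidueField A)) :=
    ((mulLeft A u).lTensor_quotient_injective_iff (maximalIdeal A)).mpr hu
  refine mem_smul_top_of_forall_mem_sup_pow_smul_top I fun n => ?_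
  induction n with
  | zero => simp [Ideal.map_top]
  | succ n ih =>
    have hle : maximalIdeal A * (I ⊔ maximalIdeal A ^ n) ≤ I ⊔ maximalIdeal A ^ (n + 1) := by
      rw [Ideal.mul_sup, pow_succ']
      exact sup_le_sup_right Ideal.mul_le_right _
    exact Ideal.mem_smul_top_of_lTensor_quotient_injective (mulLeft A u)
      (sup_le_sup_left (Ideal.pow_le_pow_right n.le_succ) I)
      ((mulLeft A u).lTensor_quotient_injective_of_mul_le hk hle) ih
      (Submodule.smul_mono_left le_sup_left hb)

end LocalCriterion

theorem local_criterion_nonzerodivisor_flat_general (A B : Type*) [CommRing A] [CommRing B]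
    [IsNoetherianRing B] [IsLocalRing A] [IsLocalRing B]
    [Algebra A B] [IsLocalHom (algebraMap A B)] [Module.Flat A B] (u : B) :
    (u ∈ nonZeroDivisors B ∧ Module.Flat A (B ⧸ Ideal.span {u})) ↔
      (u ⊗ₜ[A] (1 : IsLocalRing.ResidueField A)) ∈
        nonZeroDivisors (B ⊗[A] IsLocalRing.ResidueField A) := by
  rw [Algebra.TensorProduct.tmul_one_mem_nonZeroDivisors_iff]
  change _ ↔ Function.Injective ((mulLeft A u).lTensor (A ⧸ maximalIdeal A))
  rw [(mulLeft A u).lTensor_quotient_injective_iff]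
  constructor
  · rintro ⟨hu, hflat⟩
    exact (flat_quotient_span_singleton_iff hu).mp hflat _
  · intro hm
    have hI : ∀ (I : Ideal A) (b : B), u * b ∈ I • (⊤ : Submodule A B) → b ∈ I • ⊤ :=
      fun I _ => mem_smul_top_of_mul_mem_smul_top_of_maximalIdeal hm I
    have hu : u ∈ nonZeroDivisors B := by
      refine mem_nonZeroDivisors_iff_left.mpr fun b hb => ?_
      simpa only [Submodule.bot_smul, Submodule.mem_bot] using hI ⊥ b (by
        rw [Submodule.bot_smul, Submodule.mem_bot, hb])
    exact ⟨hu, (flat_quotient_span_singleton_iff hu).mpr hI⟩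

theorem local_criterion_nonzerodivisor_flat (A B : Type*) [CommRing A] [CommRing B]
    [IsNoetherianRing A] [IsNoetherianRing B] [IsLocalRing A] [IsLocalRing B]
    [Algebra A B] [IsLocalHom (algebraMap A B)] [Module.Flat A B] (u : B) :
    (u ∈ nonZeroDivisors B ∧ Module.Flat A (B ⧸ Ideal.span {u})) ↔
      (u ⊗ₜ[A] (1 : IsLocalRing.ResidueField A)) ∈
        nonZeroDivisors (B ⊗[A] IsLocalRing.ResidueField A) :=
  local_criterion_nonzerodivisor_flat_general A B u
end

section
/- Let π : Y → T be finite flat, L an invertible sheaf on Y, and σ a global section of L whose zero locus maps into a closed subset Z ⊂ T with open complement U = T ∖ Z. Then the section det(π_* σ) : det(π_* O_Y) → det(π_* L), viewed as a global section of the norm N_{Y/T}(L) = det(π_* L) ⊗ det(π_* O_Y)^{−1}, restricts to a trivialization (nowhere vanishing section) of N_{Y/T}(L) over U. -/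
open scoped TensorProduct

/-!
STATEMENT 15. Let `π : Y → T` be finite flat, `L` an invertible sheaf on `Y`,
and `σ` a global section of `L` whose zero locus maps into a closed subset
`Z ⊂ T`, with `U = T ∖ Z`.  Then the section
`det(π_* σ) : det(π_* O_Y) → det(π_* L)`, viewed as a global section of the norm
`N_{Y/T}(L) = det(π_* L) ⊗ det(π_* O_Y)^{−1}`, restricts to a nowhere-vanishing
section (a trivialization) of `N_{Y/T}(L)` over `U`.

Model: `T = Spec A`, `Y = Spec B` with `B` a finite (locally) free `A`-algebra,
`L` trivialized so that `σ = b ∈ B`; then `det (π_* σ) = Algebra.norm A b` and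
`N_{Y/T}(L)` is trivial, so the claim is: at every point `p ∈ U` — i.e. every
prime `p` such that `σ` is invertible on the fiber, i.e. the image `b ⊗ 1` of
`b` in `B ⊗_A κ(p)` is a unit — the section `Algebra.norm A b` of `O_T` does
not vanish, i.e. `Algebra.norm A b ∉ p`.
-/

noncomputable abbrev resField {A : Type*} [CommRing A] (p : PrimeSpectrum A) : Type _ :=
  IsLocalRing.ResidueField (Localization.AtPrime p.asIdeal)

theorem norm_section_trivializes (A B : Type*) [CommRing A] [CommRing B] [Algebra A B]
    [Module.Finite A B] [Module.Free A B] (b : B) (p : PrimeSpectrum A)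
    (hb : IsUnit (b ⊗ₜ[A] (1 : resField p) : B ⊗[A] resField p)) :
    Algebra.norm A b ∉ p.asIdeal := by
  set k := resField p
  -- transfer to k ⊗[A] B
  have hb' : IsUnit ((1 : k) ⊗ₜ[A] b : k ⊗[A] B) := by
    have := hb.map (Algebra.TensorProduct.comm A B k).toRingHom
    simpa using this
  -- norm of a unit is a unit
  have hnorm : IsUnit (Algebra.norm k ((1 : k) ⊗ₜ[A] b : k ⊗[A] B)) :=
    hb'.map (Algebra.norm k)
  have key : Algebra.norm k ((1 : k) ⊗ₜ[A] b : k ⊗[A] B)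
      = algebraMap A k (Algebra.norm A b) := by
    rw [Algebra.norm_apply, ← Algebra.baseChange_lmul, LinearMap.det_baseChange,
      Algebra.norm_apply]
  intro hmem
  have h0 : algebraMap A k (Algebra.norm A b) = 0 := by
    have : algebraMap A (Localization.AtPrime p.asIdeal) (Algebra.norm A b)
        ∈ IsLocalRing.maximalIdeal (Localization.AtPrime p.asIdeal) :=
      (IsLocalization.AtPrime.to_map_mem_maximal_iff _ p.asIdeal _).mpr hmem
    rw [IsScalarTower.algebraMap_apply A (Localization.AtPrime p.asIdeal) k]
    exact (IsLocalRing.residue_eq_zero_iff _).mpr this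
  rw [key, h0] at hnorm
  exact hnorm.ne_zero rfl
end
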